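/- Let X be a complex Banach space, let P be an L-projection on X** with range i_X(X), and let Y be a closed subspace of X with closed unit ball B_Y. Then P maps Y^{⊥⊥} onto i_X(Y) if and only if P maps the weak-star closure of i_X(B_Y) in X** onto i_X(B_Y). -/

import Mathlib

open NormedSpace

noncomputable section

set_option maxHeartbeats 1000000

/-- The transpose (dual map) of a continuous linear map between (semi)normed spaces:
`ctranspose f` sends a functional `g` to `g ∘ f`. -/
def ctranspose {E F : Type*} [SeminormedAddCommGroup E] [NormedSpace ℂ E]
    [SeminormedAddCommGroup F] [NormedSpace ℂ F] (f : E →L[ℂ] F) :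
    StrongDual ℂ F →L[ℂ] StrongDual ℂ E :=
  (ContinuousLinearMap.compL ℂ E F ℂ).flip f

/-- A bounded linear projection `P` is an L-projection if `‖z‖ = ‖P z‖ + ‖z - P z‖`
for all `z`. -/
def IsLProjection {Z : Type*} [SeminormedAddCommGroup Z] [NormedSpace ℂ Z]
    (P : Z →L[ℂ] Z) : Prop :=
  (∀ z, P (P z) = P z) ∧ ∀ z, ‖z‖ = ‖P z‖ + ‖z - P z‖

/-! The weak-star closure of `i_X(B_Y)` is exactly `Y^{⊥⊥} ∩ B_{X**}`. It lies there because
both conditions are weak-star closed. Conversely, a point `Ψ` of `Y^{⊥⊥} ∩ B_{X**}` outside it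
would be separated from `i_X(B_Y)` by some `g ∈ X*` with `re Ψ(g) < u < re g(y)` for `y ∈ B_Y`;
as `B_Y` is balanced this gives `‖g|_Y‖ ≤ -u`, and since `Ψ` cannot tell `g` from a
norm-preserving Hahn–Banach extension of `g|_Y`, also `|Ψ(g)| ≤ -u`, a contradiction.

Both sides of the equivalence are then statements about the contraction `P`, which fixes
`i_X(Y) ⊆ Y^{⊥⊥}`: one restricts to unit balls, and the other direction is recovered by
scaling. -/

section

open Metric RCLike

variable {𝕜 : Type*} [RCLike 𝕜]

theorem WeakDual.geometric_hahn_banach_point_closure {E : Type*} [AddCommGroup E]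
    [TopologicalSpace E] [Module 𝕜 E] {s : Set (WeakDual 𝕜 E)} (hs : Convex ℝ s) {Φ : WeakDual 𝕜 E}
    (hΦ : Φ ∉ closure s) :
    ∃ (g : E) (u : ℝ), re (Φ g) < u ∧ ∀ Ψ ∈ s, u < re (Ψ g) := by
  have hcl := Convex.closure (𝕜 := ℝ) (E := WeakDual 𝕜 E) hs
  -- instance search does not find this tower, which `WeakBilin.locallyConvexSpace` needs
  have : IsScalarTower ℝ 𝕜 (WeakDual 𝕜 E) :=
    ⟨fun r c Φ => ContinuousLinearMap.ext fun g => smul_assoc r c (Φ g)⟩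
  have : LocallyConvexSpace ℝ (WeakDual 𝕜 E) := WeakBilin.locallyConvexSpace
  obtain ⟨f, u, hfΦ, hfs⟩ :=
    RCLike.geometric_hahn_banach_point_closed (𝕜 := 𝕜) hcl isClosed_closure hΦ
  obtain ⟨g, rfl⟩ := LinearMap.dualEmbedding_surjective _ f
  exact ⟨g, u, hfΦ, fun Ψ hΨ => hfs Ψ (subset_closure hΨ)⟩

theorem Balanced.norm_le_neg_of_forall_lt_re {E : Type*} [AddCommGroup E] [Module 𝕜 E]
    {s : Set E} (hs : Balanced 𝕜 s) (f : E →ₗ[𝕜] 𝕜) {u : ℝ} (h : ∀ x ∈ s, u < re (f x))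
    {x : E} (hx : x ∈ s) : ‖f x‖ ≤ -u := by
  obtain ⟨c, hc, hcx⟩ := exists_norm_eq_mul_self (f x)
  have := h _ (hs.smul_mem (by rw [norm_neg, hc] : ‖-c‖ ≤ 1) hx)
  rw [map_smul, smul_eq_mul, neg_mul, ← hcx, map_neg, ofReal_re] at this
  linarith

theorem image_eq_iff_image_inter_closedBall_eq {E : Type*} [SeminormedAddCommGroup E]
    [NormedSpace 𝕜 E] {F : Type*} [FunLike F E E] [LinearMapClass F 𝕜 E E] {P : F}
    (hP : ∀ z, ‖P z‖ ≤ ‖z‖) {A V : Submodule 𝕜 E} (hVA : V ≤ A) (hPV : ∀ v ∈ V, P v = v) :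
    P '' A = V ↔ P '' ((A : Set E) ∩ closedBall 0 1) = (V : Set E) ∩ closedBall 0 1 := by
  constructor
  · intro h
    refine Set.Subset.antisymm ?_ fun v hv => ⟨v, ⟨hVA hv.1, hv.2⟩, hPV v hv.1⟩
    rintro _ ⟨z, ⟨hzA, hz⟩, rfl⟩
    refine ⟨h ▸ ⟨z, hzA, rfl⟩, ?_⟩
    rw [mem_closedBall_zero_iff] at hz ⊢
    exact (hP z).trans hz
  · intro h
    refine Set.Subset.antisymm ?_ fun v hv => ⟨v, hVA hv, hPV v hv⟩
    rintro _ ⟨z, hzA, rfl⟩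
    -- scaling by `‖z‖ + 1` rather than `‖z‖` avoids the case `z = 0`
    set c : 𝕜 := ((‖z‖ + 1 : ℝ) : 𝕜)
    have hc : c ≠ 0 := by simp only [c, ne_eq, ofReal_eq_zero]; positivity
    have hw : c⁻¹ • z ∈ (A : Set E) ∩ closedBall 0 1 := by
      refine ⟨A.smul_mem _ hzA, ?_⟩
      rw [mem_closedBall_zero_iff, norm_smul, norm_inv, norm_ofReal,
        abs_of_pos (by positivity), inv_mul_le_one₀ (by positivity)]
      linarith
    have hPw : P (c⁻¹ • z) ∈ V := (h ▸ Set.mem_image_of_mem P hw).1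
    simpa [smul_smul, hc] using V.smul_mem c hPw

variable {X : Type*} [SeminormedAddCommGroup X] [NormedSpace 𝕜 X]

theorem image_inter_closedBall_zero_of_norm_apply_eq {F : Type*} [SeminormedAddCommGroup F]
    {f : X → F} (hf : ∀ x, ‖f x‖ = ‖x‖) (s : Set X) (r : ℝ) :
    f '' (s ∩ closedBall 0 r) = f '' s ∩ closedBall 0 r := by
  ext y
  constructor
  · rintro ⟨x, ⟨hx, hxr⟩, rfl⟩
    exact ⟨⟨x, hx, rfl⟩, by simpa [hf] using hxr⟩
  · rintro ⟨⟨x, hx, rfl⟩, hxr⟩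
    exact ⟨x, ⟨hx, by simpa [hf] using hxr⟩, rfl⟩

theorem norm_inclusionInDoubleDual (x : X) : ‖inclusionInDoubleDual 𝕜 X x‖ = ‖x‖ :=
  (inclusionInDoubleDualLi 𝕜).norm_map x

def weakStarClosure {E : Type*} [SeminormedAddCommGroup E] [NormedSpace 𝕜 E]
    (s : Set (StrongDual 𝕜 E)) : Set (StrongDual 𝕜 E) :=
  StrongDual.toWeakDual ⁻¹' closure (StrongDual.toWeakDual '' s)

namespace Submodule

def biannihilator (Y : Submodule 𝕜 X) : Submodule 𝕜 (StrongDual 𝕜 (StrongDual 𝕜 X)) where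
  carrier := {Ψ | ∀ f : StrongDual 𝕜 X, (∀ y ∈ Y, f y = 0) → Ψ f = 0}
  add_mem' hΨ hΦ f hf := by simp [hΨ f hf, hΦ f hf]
  zero_mem' _ _ := rfl
  smul_mem' c Ψ hΨ f hf := by simp [hΨ f hf]

variable (Y : Submodule 𝕜 X)

theorem map_inclusionInDoubleDual_le_biannihilator :
    Y.map (inclusionInDoubleDual 𝕜 X).toLinearMap ≤ Y.biannihilator := by
  rintro _ ⟨x, hx, rfl⟩ f hf
  exact hf x hx

theorem isClosed_toStrongDual_preimage_biannihilator :
    IsClosed (WeakDual.toStrongDual ⁻¹'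
      (Y.biannihilator : Set (StrongDual 𝕜 (StrongDual 𝕜 X)))) := by
  have : WeakDual.toStrongDual ⁻¹' (Y.biannihilator : Set (StrongDual 𝕜 (StrongDual 𝕜 X))) =
      ⋂ (f : StrongDual 𝕜 X) (_ : ∀ y ∈ Y, f y = 0), {Φ | Φ f = 0} := by
    ext; simp [biannihilator]
  rw [this]
  exact isClosed_biInter fun f _ => isClosed_eq (WeakDual.eval_continuous f) continuous_const

theorem norm_apply_le_of_mem_biannihilator {Ψ : StrongDual 𝕜 (StrongDual 𝕜 X)}
    (hΨ : Ψ ∈ Y.biannihilator) (g : StrongDual 𝕜 X) :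
    ‖Ψ g‖ ≤ ‖Ψ‖ * ‖g.comp Y.subtypeL‖ := by
  obtain ⟨h, hhg, hh⟩ := exists_extension_norm_eq Y (g.comp Y.subtypeL)
  have : Ψ g = Ψ h := by
    rw [← sub_eq_zero, ← map_sub]
    exact hΨ _ fun y hy => by simp [hhg ⟨y, hy⟩]
  rw [this, ← hh]
  exact Ψ.le_opNorm h

theorem weakStarClosure_image_inter_closedBall_subset :
    weakStarClosure (inclusionInDoubleDual 𝕜 X '' ((Y : Set X) ∩ closedBall 0 1)) ⊆
      (Y.biannihilator : Set (StrongDual 𝕜 (StrongDual 𝕜 X))) ∩ closedBall 0 1 := by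
  intro Ψ hΨ
  refine closure_minimal (t := WeakDual.toStrongDual ⁻¹' Y.biannihilator ∩
    WeakDual.toStrongDual ⁻¹' closedBall 0 1)
    ?_ ((isClosed_toStrongDual_preimage_biannihilator Y).inter
      (WeakDual.isClosed_closedBall 0 1)) hΨ
  rintro _ ⟨_, ⟨x, hx, rfl⟩, rfl⟩
  exact ⟨map_inclusionInDoubleDual_le_biannihilator Y ⟨x, hx.1, rfl⟩,
    mem_closedBall_zero_iff.2
      ((double_dual_bound 𝕜 X x).trans (mem_closedBall_zero_iff.1 hx.2))⟩

theorem convex_image_inclusionInDoubleDual_inter_closedBall :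
    Convex ℝ (inclusionInDoubleDual 𝕜 X '' ((Y : Set X) ∩ closedBall 0 1)) := by
  rintro _ ⟨x, ⟨hxY, hx⟩, rfl⟩ _ ⟨y, ⟨hyY, hy⟩, rfl⟩ a b ha hb hab
  refine ⟨(a : 𝕜) • x + (b : 𝕜) • y, ⟨Y.add_mem (Y.smul_mem _ hxY) (Y.smul_mem _ hyY), ?_⟩, ?_⟩
  · rw [mem_closedBall_zero_iff] at hx hy ⊢
    calc ‖(a : 𝕜) • x + (b : 𝕜) • y‖ ≤ a * ‖x‖ + b * ‖y‖ := by
          grw [norm_add_le, norm_smul, norm_smul, RCLike.norm_of_nonneg ha,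
            RCLike.norm_of_nonneg hb]
      _ ≤ a * 1 + b * 1 := by gcongr
      _ = 1 := by rw [mul_one, mul_one, hab]
  · ext f
    simp [RCLike.real_smul_eq_coe_smul (K := 𝕜)]

theorem biannihilator_inter_closedBall_subset_weakStarClosure :
    (Y.biannihilator : Set (StrongDual 𝕜 (StrongDual 𝕜 X))) ∩ closedBall 0 1 ⊆
      weakStarClosure (inclusionInDoubleDual 𝕜 X '' ((Y : Set X) ∩ closedBall 0 1)) := by
  rintro Ψ ⟨hΨY, hΨ1⟩
  replace hΨ1 : ‖Ψ‖ ≤ 1 := (mem_closedBall_zero_iff (a := Ψ)).1 hΨ1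
  by_contra hΨ
  set B : Set X := (Y : Set X) ∩ closedBall 0 1
  have hB : Balanced 𝕜 B :=
    (balanced_iff_smul_mem.2 fun a _ _ hx => Y.smul_mem a hx).inter balanced_closedBall_zero
  have hiB := convex_image_inclusionInDoubleDual_inter_closedBall Y
  obtain ⟨g, u, hgΨ, hsep⟩ := WeakDual.geometric_hahn_banach_point_closure
    (hiB.is_linear_image (f := StrongDual.toWeakDual) ⟨fun _ _ => rfl, fun _ _ => rfl⟩) hΨ
  have hgB : ∀ x ∈ B, u < re (g x) := fun x hx => hsep _ ⟨_, ⟨x, hx, rfl⟩, rfl⟩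
  have hu : 0 ≤ -u := by simpa using (hgB 0 ⟨Y.zero_mem, by simp⟩).le
  have hgY : ‖g.comp Y.subtypeL‖ ≤ -u := ContinuousLinearMap.opNorm_le_of_unit_norm hu
    fun y hy => hB.norm_le_neg_of_forall_lt_re g.toLinearMap hgB
      ⟨y.2, mem_closedBall_zero_iff.2 hy.le⟩
  have hΨg : ‖Ψ g‖ ≤ -u := calc
    ‖Ψ g‖ ≤ ‖Ψ‖ * ‖g.comp Y.subtypeL‖ := norm_apply_le_of_mem_biannihilator Y hΨY g
    _ ≤ 1 * -u := mul_le_mul hΨ1 hgY (norm_nonneg _) zero_le_one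
    _ = -u := one_mul _
  change re (Ψ g) < u at hgΨ
  linarith [(abs_le.1 ((RCLike.abs_re_le_norm (Ψ g)).trans hΨg)).1]

theorem weakStarClosure_image_inter_closedBall :
    weakStarClosure (inclusionInDoubleDual 𝕜 X '' ((Y : Set X) ∩ closedBall 0 1)) =
      (Y.biannihilator : Set (StrongDual 𝕜 (StrongDual 𝕜 X))) ∩ closedBall 0 1 :=
  (weakStarClosure_image_inter_closedBall_subset Y).antisymm
    (biannihilator_inter_closedBall_subset_weakStarClosure Y)

end Submodule

theorem IsLProjection.norm_apply_le {Z : Type*} [SeminormedAddCommGroup Z] [NormedSpace ℂ Z]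
    {P : Z →L[ℂ] Z} (hP : IsLProjection P) (z : Z) : ‖P z‖ ≤ ‖z‖ := by
  rw [hP.2 z]
  exact le_add_of_nonneg_right (norm_nonneg _)

theorem IsLProjection.apply_eq_self_of_mem_range {Z : Type*} [SeminormedAddCommGroup Z]
    [NormedSpace ℂ Z] {P : Z →L[ℂ] Z} (hP : IsLProjection P) {z : Z} (hz : z ∈ Set.range P) :
    P z = z := by
  obtain ⟨w, rfl⟩ := hz
  exact hP.1 w

end

theorem lprojection_maps_biannihilator_iff_maps_ball_closure_general
    (X : Type*) [NormedAddCommGroup X] [NormedSpace ℂ X]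
    (P : StrongDual ℂ (StrongDual ℂ X) →L[ℂ] StrongDual ℂ (StrongDual ℂ X))
    (hP : IsLProjection (Z := StrongDual ℂ (StrongDual ℂ X)) P)
    (hrange : Set.range P = Set.range (inclusionInDoubleDual ℂ X))
    (Y : Subspace ℂ X) :
    (P '' {Ψ : StrongDual ℂ (StrongDual ℂ X) | ∀ f : StrongDual ℂ X, (∀ y ∈ Y, f y = 0) → Ψ f = 0}
        = inclusionInDoubleDual ℂ X '' (Y : Set X)) ↔
      (P '' (StrongDual.toWeakDual ⁻¹' closure (StrongDual.toWeakDual ''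
            (inclusionInDoubleDual ℂ X '' {x : X | x ∈ Y ∧ ‖x‖ ≤ 1})))
        = inclusionInDoubleDual ℂ X '' {x : X | x ∈ Y ∧ ‖x‖ ≤ 1}) := by
  have hball : {x : X | x ∈ Y ∧ ‖x‖ ≤ 1} = (Y : Set X) ∩ Metric.closedBall 0 1 := by
    ext; simp
  have hfix : ∀ Φ ∈ Y.map (inclusionInDoubleDual ℂ X).toLinearMap, P Φ = Φ := by
    rintro _ ⟨x, -, rfl⟩
    exact hP.apply_eq_self_of_mem_range (hrange ▸ Set.mem_range_self x)
  change P '' Y.biannihilator = _ ↔ P '' weakStarClosure _ = _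
  rw [hball, Y.weakStarClosure_image_inter_closedBall,
    image_inter_closedBall_zero_of_norm_apply_eq norm_inclusionInDoubleDual]
  exact image_eq_iff_image_inter_closedBall_eq hP.norm_apply_le
    Y.map_inclusionInDoubleDual_le_biannihilator hfix

/-- Let `P` be an L-projection on `X**` with range `i_X(X)` and let `Y` be a
closed subspace of `X`. Then `P` maps `Y^{⊥⊥}` onto `i_X(Y)` if and only if `P` maps the
weak-star closure of `i_X(B_Y)` in `X**` onto `i_X(B_Y)`, where `B_Y` is the closed unit ball
of `Y`. -/
theorem lprojection_maps_biannihilator_iff_maps_ball_closure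
    (X : Type*) [NormedAddCommGroup X] [NormedSpace ℂ X] [CompleteSpace X]
    (P : StrongDual ℂ (StrongDual ℂ X) →L[ℂ] StrongDual ℂ (StrongDual ℂ X))
    (hP : IsLProjection (Z := StrongDual ℂ (StrongDual ℂ X)) P)
    (hrange : Set.range P = Set.range (inclusionInDoubleDual ℂ X))
    (Y : Subspace ℂ X) (hY : IsClosed (Y : Set X)) :
    (P '' {Ψ : StrongDual ℂ (StrongDual ℂ X) | ∀ f : StrongDual ℂ X, (∀ y ∈ Y, f y = 0) → Ψ f = 0}
        = inclusionInDoubleDual ℂ X '' (Y : Set X)) ↔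
      (P '' (StrongDual.toWeakDual ⁻¹' closure (StrongDual.toWeakDual ''
            (inclusionInDoubleDual ℂ X '' {x : X | x ∈ Y ∧ ‖x‖ ≤ 1})))
        = inclusionInDoubleDual ℂ X '' {x : X | x ∈ Y ∧ ‖x‖ ≤ 1}) :=
  lprojection_maps_biannihilator_iff_maps_ball_closure_general X P hP hrange Y
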